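/- arXiv:1711.05343 — 4 statements merged into one kernel-verified Lean document; each statement's English description precedes it below -/
import Mathlib

section
/- If 𝒞 is an 𝔽-linear monoidal category, then 𝒞_⊕ equipped with the tensor product ⊗_{𝒞_⊕}, the unit object 𝓘(𝟙) (the singleton family at the unit of 𝒞) with componentwise left and right unitors, and the associativity constraints whose set map reassociates ((s,t),r) ↦ (s,(t,r)) and whose components are the associators a_{X_s,Y_t,Z_r} of 𝒞, is a monoidal category: the associators and unitors are natural isomorphisms and the pentagon and triangle axioms hold. -/
open CategoryTheory Limits
open scoped Classical

noncomputable section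

universe u v

/-- An object of the direct sum completion: a formal direct sum `⊕_{s ∈ ι} X s`. -/
structure DSObj (C : Type u) [Category.{v} C] where
  ι : Type
  X : ι → C

variable {C : Type u} [Category.{v} C] [Preadditive C]

/-- A pre-morphism `(α, {f_{s,t}})` between formal direct sums. -/
structure PreHom (A B : DSObj C) where
  α : Finset A.ι → Finset B.ι
  hα : ∀ P Q : Finset A.ι, α (P ∪ Q) = α P ∪ α Q
  f : ∀ (s : A.ι) (t : B.ι), t ∈ α {s} → (A.X s ⟶ B.X t)

namespace PreHom

/-- The equivalence relation `∼` on pre-morphisms. -/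
def equiv {A B : DSObj C} (F G : PreHom A B) : Prop :=
  ∀ (s : A.ι) (t : B.ι),
    (∀ (h1 : t ∈ F.α {s}) (h2 : t ∈ G.α {s}), F.f s t h1 = G.f s t h2) ∧
    (∀ h1 : t ∈ F.α {s}, t ∉ G.α {s} → F.f s t h1 = 0) ∧
    (∀ h2 : t ∈ G.α {s}, t ∉ F.α {s} → G.f s t h2 = 0)

/-- Composition of pre-morphisms (diagrammatic order: `F` then `G`). -/
def comp {A B D : DSObj C} (F : PreHom A B) (G : PreHom B D) : PreHom A D where
  α := fun P => G.α (F.α P)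
  hα := fun P Q => by
    show G.α (F.α (P ∪ Q)) = G.α (F.α P) ∪ G.α (F.α Q)
    rw [F.hα, G.hα]
  f := fun s r _ => ∑ t ∈ (F.α {s}).attach,
    if h : r ∈ G.α {t.1} then F.f s t.1 t.2 ≫ G.f t.1 r h else 0

/-- The identity pre-morphism. -/
def id (A : DSObj C) : PreHom A A where
  α := fun P => P
  hα := fun _ _ => rfl
  f := fun s t ht => eqToHom (by rw [Finset.mem_singleton.mp ht])

/-- The zero pre-morphism `(Ω, ∅)`. -/
def zero (A B : DSObj C) : PreHom A B where
  α := fun _ => ∅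
  hα := fun _ _ => by simp
  f := fun _ t ht => absurd ht (Finset.notMem_empty t)

/-- Addition of pre-morphisms. -/
def add {A B : DSObj C} (F G : PreHom A B) : PreHom A B where
  α := fun P => F.α P ∪ G.α P
  hα := fun P Q => by
    show F.α (P ∪ Q) ∪ G.α (P ∪ Q) = (F.α P ∪ G.α P) ∪ (F.α Q ∪ G.α Q)
    rw [F.hα, G.hα]; ext x; simp only [Finset.mem_union]; tauto
  f := fun s t _ =>
    (if h : t ∈ F.α {s} then F.f s t h else 0) + (if h : t ∈ G.α {s} then G.f s t h else 0)

/-- Negation of a pre-morphism: `(α, {-f_{s,t}})`. -/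
def neg {A B : DSObj C} (F : PreHom A B) : PreHom A B where
  α := F.α
  hα := F.hα
  f := fun s t ht => -(F.f s t ht)

end PreHom

/-- Scalar multiplication of pre-morphisms, for a linear category. -/
def PreHom.smul {𝔽 : Type*} [Field 𝔽] [Linear 𝔽 C] {A B : DSObj C}
    (c : 𝔽) (F : PreHom A B) : PreHom A B where
  α := F.α
  hα := F.hα
  f := fun s t ht => c • F.f s t ht

end
noncomputable section
open MonoidalCategory

variable {C : Type u} [Category.{v} C] [Preadditive C] [MonoidalCategory C]

private lemma mem_image_singleton {γ δ : Type} [DecidableEq δ] {g : γ → δ} {p : γ}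
    {q : δ} (hq : q ∈ ({p} : Finset γ).image g) : g p = q := by
  rcases Finset.mem_image.mp hq with ⟨a, ha, h⟩
  rwa [Finset.mem_singleton.mp ha] at h

/-- The inclusion functor on objects: `X ↦ ⊕_{0∈{0}} X`. -/
def DSObj.incl (X : C) : DSObj C := ⟨PUnit, fun _ => X⟩

/-- The inclusion functor on morphisms: `f ↦ (Id_{{0}}, {f})`. -/
def PreHom.incl {X Y : C} (f : X ⟶ Y) : PreHom (DSObj.incl X) (DSObj.incl Y) where
  α := fun P => P
  hα := fun _ _ => rfl
  f := fun _ _ _ => f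

/-- The tensor product of objects of `𝒞_⊕`:
`(⊕_{s∈S} X_s) ⊗ (⊕_{t∈T} Y_t) = ⊕_{(s,t)∈S×T} (X_s ⊗ Y_t)`. -/
def DSObj.tensor (A B : DSObj C) : DSObj C :=
  ⟨A.ι × B.ι, fun p => A.X p.1 ⊗ B.X p.2⟩

/-- The tensor product of pre-morphisms, with set map
`(α ⊗ β)({(sᵢ,tᵢ)}ᵢ) = ∪ᵢ α(sᵢ) × β(tᵢ)` and component maps `f_{s,s̃} ⊗ g_{t,t̃}`. -/
def PreHom.tensor {A A' B B' : DSObj C} (F : PreHom A B) (G : PreHom A' B') :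
    PreHom (A.tensor A') (B.tensor B') where
  α := fun P => P.biUnion (fun p => F.α {p.1} ×ˢ G.α {p.2})
  hα := fun P Q => by
    exact Finset.union_biUnion
  f := fun p q hq => by
    have hq' : q ∈ F.α {p.1} ×ˢ G.α {p.2} := by
      obtain ⟨a, ha, h⟩ := Finset.mem_biUnion.mp hq
      rwa [Finset.mem_singleton.mp ha] at h
    have hq'' := Finset.mem_product.mp hq'
    exact F.f p.1 q.1 hq''.1 ⊗ₘ G.f p.2 q.2 hq''.2

/-- The unit object of `𝒞_⊕`: the singleton family at the unit of `𝒞`. -/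
def DSObj.unit (C : Type u) [Category.{v} C] [Preadditive C] [MonoidalCategory C] :
    DSObj C :=
  ⟨PUnit, fun _ => 𝟙_ C⟩

/-- The associativity constraint of `𝒞_⊕`, with set map `((s,t),r) ↦ (s,(t,r))`
and components the associators of `𝒞`. -/
def DSObj.assocHom (A B D : DSObj C) :
    PreHom ((A.tensor B).tensor D) (A.tensor (B.tensor D)) where
  α := fun P => P.image (fun p => (p.1.1, (p.1.2, p.2)))
  hα := fun P Q => Finset.image_union P Q
  f := fun p q hq => by
    have h := mem_image_singleton hq
    subst h
    exact (α_ (A.X p.1.1) (B.X p.1.2) (D.X p.2)).hom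

/-- The inverse associativity constraint of `𝒞_⊕`. -/
def DSObj.assocInvHom (A B D : DSObj C) :
    PreHom (A.tensor (B.tensor D)) ((A.tensor B).tensor D) where
  α := fun P => P.image (fun p => ((p.1, p.2.1), p.2.2))
  hα := fun P Q => Finset.image_union P Q
  f := fun p q hq => by
    have h := mem_image_singleton hq
    subst h
    exact (α_ (A.X p.1) (B.X p.2.1) (D.X p.2.2)).inv

/-- The left unitor of `𝒞_⊕`, with components the left unitors of `𝒞`. -/
def DSObj.leftUnitorHom (A : DSObj C) : PreHom ((DSObj.unit C).tensor A) A where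
  α := fun P => P.image Prod.snd
  hα := fun P Q => Finset.image_union P Q
  f := fun p q hq => by
    have h := mem_image_singleton hq
    subst h
    exact (λ_ (A.X p.2)).hom

/-- The inverse left unitor of `𝒞_⊕`. -/
def DSObj.leftUnitorInvHom (A : DSObj C) : PreHom A ((DSObj.unit C).tensor A) where
  α := fun P => P.image (fun s => (PUnit.unit, s))
  hα := fun P Q => Finset.image_union P Q
  f := fun s q hq => by
    have h := mem_image_singleton hq
    subst h
    exact (λ_ (A.X s)).inv

/-- The right unitor of `𝒞_⊕`, with components the right unitors of `𝒞`. -/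
def DSObj.rightUnitorHom (A : DSObj C) : PreHom (A.tensor (DSObj.unit C)) A where
  α := fun P => P.image Prod.fst
  hα := fun P Q => Finset.image_union P Q
  f := fun p q hq => by
    have h := mem_image_singleton hq
    subst h
    exact (ρ_ (A.X p.1)).hom

/-- The inverse right unitor of `𝒞_⊕`. -/
def DSObj.rightUnitorInvHom (A : DSObj C) : PreHom A (A.tensor (DSObj.unit C)) where
  α := fun P => P.image (fun s => (s, PUnit.unit))
  hα := fun P Q => Finset.image_union P Q
  f := fun s q hq => by
    have h := mem_image_singleton hq
    subst h
    exact (ρ_ (A.X s)).inv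

end

/-!
The structural pre-morphisms (associators, unitors, identities, and their tensor products and
composites) all have a set map induced by a map of indices, `α {s} = {φ s}`. The composite of
such pre-morphisms is again of this form, and each of its components is a single composite of
components, so the pentagon, the triangle and the inverse laws hold componentwise because they
hold in `𝒞`. For naturality against an arbitrary pre-morphism the reindexing maps are injective,
so again each component of a composite is a single term of the defining sum.
-/

open MonoidalCategory

theorem Finset.image_assoc_product {α β γ : Type*} [DecidableEq (α × β × γ)]
    (s : Finset α) (t : Finset β) (u : Finset γ) :
    ((s ×ˢ t) ×ˢ u).image (fun p => (p.1.1, (p.1.2, p.2))) = s ×ˢ (t ×ˢ u) := by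
  ext ⟨a, b, c⟩
  simp [and_assoc]

section Coherence

variable {C : Type*} [Category C] [MonoidalCategory C]

theorem pentagon_tensorHom (W X Y Z : C) :
    ((α_ W X Y).hom ⊗ₘ 𝟙 Z) ≫ (α_ W (X ⊗ Y) Z).hom ≫ (𝟙 W ⊗ₘ (α_ X Y Z).hom) =
      (α_ (W ⊗ X) Y Z).hom ≫ (α_ W X (Y ⊗ Z)).hom := by
  rw [tensorHom_id, id_tensorHom, pentagon]

theorem triangle_tensorHom (X Y : C) :
    (α_ X (𝟙_ C) Y).hom ≫ (𝟙 X ⊗ₘ (λ_ Y).hom) = (ρ_ X).hom ⊗ₘ 𝟙 Y := by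
  rw [tensorHom_id, id_tensorHom, triangle]

theorem leftUnitor_naturality_tensorHom {X Y : C} (f : X ⟶ Y) :
    (𝟙 (𝟙_ C) ⊗ₘ f) ≫ (λ_ Y).hom = (λ_ X).hom ≫ f := by
  rw [id_tensorHom, leftUnitor_naturality]

theorem rightUnitor_naturality_tensorHom {X Y : C} (f : X ⟶ Y) :
    (f ⊗ₘ 𝟙 (𝟙_ C)) ≫ (ρ_ Y).hom = (ρ_ X).hom ≫ f := by
  rw [tensorHom_id, rightUnitor_naturality]

end Coherence

namespace PreHom

section

variable {C : Type*} [Category C] {A B : DSObj C}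

def IsInducedBy (F : PreHom A B) (φ : A.ι → B.ι) : Prop :=
  ∀ s, F.α {s} = {φ s}

theorem isInducedBy_id : (PreHom.id A).IsInducedBy fun s => s := fun _ => rfl

theorem isInducedBy_of_α_eq_image {F : PreHom A B} {φ : A.ι → B.ι}
    (hF : F.α = Finset.image φ) : F.IsInducedBy φ := fun s => by
  rw [hF, Finset.image_singleton]

end

section

variable {C : Type*} [Category C] [MonoidalCategory C] {A A' B B' : DSObj C}

theorem tensor_α_singleton (F : PreHom A B) (G : PreHom A' B') (p : (A.tensor A').ι) :
    (F.tensor G).α {p} = F.α {p.1} ×ˢ G.α {p.2} :=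
  Finset.singleton_biUnion

theorem IsInducedBy.tensor {F : PreHom A B} {G : PreHom A' B'} {φ : A.ι → B.ι}
    {ψ : A'.ι → B'.ι} (hF : F.IsInducedBy φ) (hG : G.IsInducedBy ψ) :
    (F.tensor G).IsInducedBy fun p => (φ p.1, ψ p.2) := fun p => by
  rw [tensor_α_singleton, hF, hG, Finset.singleton_product_singleton]
  rfl

end

variable {C : Type*} [Category C] [Preadditive C] {A B D : DSObj C}

theorem comp_α (F : PreHom A B) (G : PreHom B D) (P : Finset A.ι) :
    (F.comp G).α P = G.α (F.α P) := rfl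

theorem IsInducedBy.comp {F : PreHom A B} {G : PreHom B D} {φ : A.ι → B.ι} {ψ : B.ι → D.ι}
    (hF : F.IsInducedBy φ) (hG : G.IsInducedBy ψ) : (F.comp G).IsInducedBy (ψ ∘ φ) :=
  fun s => (congrArg G.α (hF s)).trans (hG (φ s))

theorem equiv_of_α_eq {F G : PreHom A B} (hα : ∀ s, F.α {s} = G.α {s})
    (hf : ∀ s t (h₁ : t ∈ F.α {s}) (h₂ : t ∈ G.α {s}), F.f s t h₁ = G.f s t h₂) :
    F.equiv G := fun s t =>
  ⟨hf s t, fun h₁ h₂ => absurd (hα s ▸ h₁) h₂, fun h₂ h₁ => absurd (hα s ▸ h₂) h₁⟩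

theorem IsInducedBy.equiv {F G : PreHom A B} {φ : A.ι → B.ι} (hF : F.IsInducedBy φ)
    (hG : G.IsInducedBy φ) (hf : ∀ s h₁ h₂, F.f s (φ s) h₁ = G.f s (φ s) h₂) : F.equiv G :=
  equiv_of_α_eq (fun s => (hF s).trans (hG s).symm) fun s t h₁ h₂ => by
    obtain rfl := Finset.mem_singleton.mp (hF s ▸ h₁)
    exact hf s h₁ h₂

theorem comp_f_eq_of_unique {F : PreHom A B} {G : PreHom B D} {s : A.ι} {r : D.ι}
    (h : r ∈ (F.comp G).α {s}) {t : B.ι} (ht : t ∈ F.α {s}) (hr : r ∈ G.α {t})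
    (huniq : ∀ u ∈ F.α {s}, r ∈ G.α {u} → u = t) :
    (F.comp G).f s r h = F.f s t ht ≫ G.f t r hr := by
  refine (Finset.sum_eq_single_of_mem ⟨t, ht⟩ (Finset.mem_attach _ _) ?_).trans (dif_pos hr)
  rintro u - hut
  exact dif_neg fun hu => hut (Subtype.ext (huniq u.1 u.2 hu))

theorem IsInducedBy.comp_f {F : PreHom A B} {G : PreHom B D} {φ : A.ι → B.ι}
    (hF : F.IsInducedBy φ) {s : A.ι} {r : D.ι} (h : r ∈ (F.comp G).α {s}) :
    (F.comp G).f s r h =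
      F.f s (φ s) (hF s ▸ Finset.mem_singleton_self _) ≫ G.f (φ s) r (hF s ▸ h) :=
  comp_f_eq_of_unique h _ _ fun _ hu _ => Finset.mem_singleton.mp (hF s ▸ hu)

theorem IsInducedBy.comp_f_of_injective {F : PreHom A B} {G : PreHom B D} {φ : B.ι → D.ι}
    (hG : G.IsInducedBy φ) (hφ : φ.Injective) {s : A.ι} {t : B.ι}
    (h : φ t ∈ (F.comp G).α {s}) (ht : t ∈ F.α {s}) :
    (F.comp G).f s (φ t) h = F.f s t ht ≫ G.f t (φ t) (hG t ▸ Finset.mem_singleton_self _) :=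
  comp_f_eq_of_unique h _ _ fun _ _ hu => hφ (Finset.mem_singleton.mp (hG _ ▸ hu)).symm

end PreHom

namespace DSObj

open PreHom

section

variable {C : Type*} [Category C] [MonoidalCategory C]

theorem assocHom_α_product (A B D : DSObj C) (s : Finset A.ι) (t : Finset B.ι)
    (u : Finset D.ι) : (assocHom A B D).α ((s ×ˢ t) ×ˢ u) = s ×ˢ (t ×ˢ u) :=
  -- the set maps of `𝒞_⊕` decide equality of indices classically
  @Finset.image_assoc_product _ _ _ (Classical.decEq _) s t u

theorem assocHom_isInducedBy (A B D : DSObj C) :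
    (assocHom A B D).IsInducedBy fun p => (p.1.1, (p.1.2, p.2)) :=
  isInducedBy_of_α_eq_image rfl

theorem assocInvHom_isInducedBy (A B D : DSObj C) :
    (assocInvHom A B D).IsInducedBy fun p => ((p.1, p.2.1), p.2.2) :=
  isInducedBy_of_α_eq_image rfl

end

variable {C : Type*} [Category C] [Preadditive C] [MonoidalCategory C]

theorem leftUnitorHom_isInducedBy (A : DSObj C) :
    (leftUnitorHom A).IsInducedBy Prod.snd :=
  isInducedBy_of_α_eq_image rfl

theorem leftUnitorInvHom_isInducedBy (A : DSObj C) :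
    (leftUnitorInvHom A).IsInducedBy fun s => (PUnit.unit, s) :=
  isInducedBy_of_α_eq_image rfl

theorem rightUnitorHom_isInducedBy (A : DSObj C) :
    (rightUnitorHom A).IsInducedBy Prod.fst :=
  isInducedBy_of_α_eq_image rfl

theorem rightUnitorInvHom_isInducedBy (A : DSObj C) :
    (rightUnitorInvHom A).IsInducedBy fun s => (s, PUnit.unit) :=
  isInducedBy_of_α_eq_image rfl

theorem assocHom_comp_assocInvHom (A B D : DSObj C) :
    ((assocHom A B D).comp (assocInvHom A B D)).equiv (PreHom.id _) :=
  ((assocHom_isInducedBy A B D).comp (assocInvHom_isInducedBy A B D)).equiv isInducedBy_id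
    fun _ _ _ => by
      -- `erw`: an index type `(A.tensor B).ι` is a product only up to unfolding `DSObj.tensor`
      erw [(assocHom_isInducedBy A B D).comp_f]
      exact Iso.hom_inv_id _

theorem assocInvHom_comp_assocHom (A B D : DSObj C) :
    ((assocInvHom A B D).comp (assocHom A B D)).equiv (PreHom.id _) :=
  ((assocInvHom_isInducedBy A B D).comp (assocHom_isInducedBy A B D)).equiv isInducedBy_id
    fun _ _ _ => by
      erw [(assocInvHom_isInducedBy A B D).comp_f]
      exact Iso.inv_hom_id _

theorem leftUnitorHom_comp_leftUnitorInvHom (A : DSObj C) :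
    ((leftUnitorHom A).comp (leftUnitorInvHom A)).equiv (PreHom.id _) :=
  ((leftUnitorHom_isInducedBy A).comp (leftUnitorInvHom_isInducedBy A)).equiv isInducedBy_id
    fun _ _ _ => by
      erw [(leftUnitorHom_isInducedBy A).comp_f]
      exact Iso.hom_inv_id _

theorem leftUnitorInvHom_comp_leftUnitorHom (A : DSObj C) :
    ((leftUnitorInvHom A).comp (leftUnitorHom A)).equiv (PreHom.id _) :=
  ((leftUnitorInvHom_isInducedBy A).comp (leftUnitorHom_isInducedBy A)).equiv isInducedBy_id
    fun _ _ _ => by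
      erw [(leftUnitorInvHom_isInducedBy A).comp_f]
      exact Iso.inv_hom_id _

theorem rightUnitorHom_comp_rightUnitorInvHom (A : DSObj C) :
    ((rightUnitorHom A).comp (rightUnitorInvHom A)).equiv (PreHom.id _) :=
  ((rightUnitorHom_isInducedBy A).comp (rightUnitorInvHom_isInducedBy A)).equiv isInducedBy_id
    fun _ _ _ => by
      erw [(rightUnitorHom_isInducedBy A).comp_f]
      exact Iso.hom_inv_id _

theorem rightUnitorInvHom_comp_rightUnitorHom (A : DSObj C) :
    ((rightUnitorInvHom A).comp (rightUnitorHom A)).equiv (PreHom.id _) :=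
  ((rightUnitorInvHom_isInducedBy A).comp (rightUnitorHom_isInducedBy A)).equiv isInducedBy_id
    fun _ _ _ => by
      erw [(rightUnitorInvHom_isInducedBy A).comp_f]
      exact Iso.inv_hom_id _

theorem pentagon (A B D E : DSObj C) :
    (((assocHom A B D).tensor (PreHom.id E)).comp
        ((assocHom A (B.tensor D) E).comp ((PreHom.id A).tensor (assocHom B D E)))).equiv
      ((assocHom (A.tensor B) D E).comp (assocHom A B (D.tensor E))) := by
  have hABD := (assocHom_isInducedBy A B D).tensor (isInducedBy_id (A := E))
  refine (hABD.comp ((assocHom_isInducedBy A (B.tensor D) E).comp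
    (isInducedBy_id.tensor (assocHom_isInducedBy B D E)))).equiv
    ((assocHom_isInducedBy (A.tensor B) D E).comp (assocHom_isInducedBy A B (D.tensor E)))
    fun p _ _ => ?_
  erw [hABD.comp_f, (assocHom_isInducedBy _ _ _).comp_f, (assocHom_isInducedBy _ _ _).comp_f]
  exact pentagon_tensorHom (A.X p.1.1.1) (B.X p.1.1.2) (D.X p.1.2) (E.X p.2)

theorem triangle (A B : DSObj C) :
    ((assocHom A (unit C) B).comp ((PreHom.id A).tensor (leftUnitorHom B))).equiv
      ((rightUnitorHom A).tensor (PreHom.id B)) :=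
  ((assocHom_isInducedBy A (unit C) B).comp
    (isInducedBy_id.tensor (leftUnitorHom_isInducedBy B))).equiv
    ((rightUnitorHom_isInducedBy A).tensor isInducedBy_id) fun p _ _ => by
      erw [(assocHom_isInducedBy _ _ _).comp_f]
      exact triangle_tensorHom (A.X p.1.1) (B.X p.2)

theorem assocHom_naturality {A A' B B' D D' : DSObj C} (F : PreHom A A') (G : PreHom B B')
    (H : PreHom D D') :
    (((F.tensor G).tensor H).comp (assocHom A' B' D')).equiv
      ((assocHom A B D).comp (F.tensor (G.tensor H))) := by
  have hα : ∀ p, ((assocHom A B D).comp (F.tensor (G.tensor H))).α {p} =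
      F.α {p.1.1} ×ˢ (G.α {p.1.2} ×ˢ H.α {p.2}) := fun p => by
    erw [comp_α, assocHom_isInducedBy A B D p, tensor_α_singleton, tensor_α_singleton]
    rfl
  refine equiv_of_α_eq (fun p => ?_) fun p q h₁ h₂ => ?_
  · erw [hα, comp_α, tensor_α_singleton, tensor_α_singleton, assocHom_α_product]
  · obtain ⟨ha, hbc⟩ := Finset.mem_product.mp (hα p ▸ h₂)
    obtain ⟨hb, hc⟩ := Finset.mem_product.mp hbc
    have ht : ((q.1, q.2.1), q.2.2) ∈ ((F.tensor G).tensor H).α {p} := by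
      erw [tensor_α_singleton, tensor_α_singleton]
      exact Finset.mem_product.mpr ⟨Finset.mem_product.mpr ⟨ha, hb⟩, hc⟩
    erw [(assocHom_isInducedBy A' B' D').comp_f_of_injective (Equiv.prodAssoc _ _ _).injective
      h₁ ht, (assocHom_isInducedBy A B D).comp_f]
    exact associator_naturality (F.f _ _ ha) (G.f _ _ hb) (H.f _ _ hc)

theorem leftUnitorHom_naturality {A B : DSObj C} (F : PreHom A B) :
    (((PreHom.id (unit C)).tensor F).comp (leftUnitorHom B)).equiv
      ((leftUnitorHom A).comp F) := by
  have hα : ∀ p, ((leftUnitorHom A).comp F).α {p} = F.α {p.2} := fun p => by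
    erw [comp_α, leftUnitorHom_isInducedBy A p]
  refine equiv_of_α_eq (fun p => ?_) fun p q h₁ h₂ => ?_
  · erw [hα, comp_α, tensor_α_singleton]
    exact Finset.product_image_snd (Finset.singleton_nonempty _)
  · have hq : q ∈ F.α {p.2} := hα p ▸ h₂
    have ht : (PUnit.unit, q) ∈ ((PreHom.id (unit C)).tensor F).α {p} := by
      erw [tensor_α_singleton]
      exact Finset.mem_product.mpr ⟨Finset.mem_singleton_self _, hq⟩
    erw [(leftUnitorHom_isInducedBy B).comp_f_of_injective (Prod.snd_injective (α := PUnit))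
      h₁ ht, (leftUnitorHom_isInducedBy A).comp_f]
    exact leftUnitor_naturality_tensorHom (F.f _ _ hq)

theorem rightUnitorHom_naturality {A B : DSObj C} (F : PreHom A B) :
    ((F.tensor (PreHom.id (unit C))).comp (rightUnitorHom B)).equiv
      ((rightUnitorHom A).comp F) := by
  have hα : ∀ p, ((rightUnitorHom A).comp F).α {p} = F.α {p.1} := fun p => by
    erw [comp_α, rightUnitorHom_isInducedBy A p]
  refine equiv_of_α_eq (fun p => ?_) fun p q h₁ h₂ => ?_
  · erw [hα, comp_α, tensor_α_singleton]
    exact Finset.product_image_fst (Finset.singleton_nonempty _)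
  · have hq : q ∈ F.α {p.1} := hα p ▸ h₂
    have ht : (q, PUnit.unit) ∈ (F.tensor (PreHom.id (unit C))).α {p} := by
      erw [tensor_α_singleton]
      exact Finset.mem_product.mpr ⟨hq, Finset.mem_singleton_self _⟩
    erw [(rightUnitorHom_isInducedBy B).comp_f_of_injective (Prod.fst_injective (β := PUnit))
      h₁ ht, (rightUnitorHom_isInducedBy A).comp_f]
    exact rightUnitor_naturality_tensorHom (F.f _ _ hq)

end DSObj

theorem dsum_is_monoidal_general {C : Type u} [Category.{v} C] [Preadditive C]
    [MonoidalCategory C] :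
    -- the associators are natural ...
    (∀ {A A' B B' D D' : DSObj C} (F : PreHom A A') (G : PreHom B B') (H : PreHom D D'),
      (((F.tensor G).tensor H).comp (DSObj.assocHom A' B' D')).equiv
        ((DSObj.assocHom A B D).comp (F.tensor (G.tensor H)))) ∧
    -- ... isomorphisms
    (∀ A B D : DSObj C,
      (((DSObj.assocHom A B D).comp (DSObj.assocInvHom A B D)).equiv
        (PreHom.id ((A.tensor B).tensor D))) ∧
      (((DSObj.assocInvHom A B D).comp (DSObj.assocHom A B D)).equiv
        (PreHom.id (A.tensor (B.tensor D))))) ∧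
    -- the left unitors are natural isomorphisms
    (∀ {A B : DSObj C} (F : PreHom A B),
      (((PreHom.id (DSObj.unit C)).tensor F).comp (DSObj.leftUnitorHom B)).equiv
        ((DSObj.leftUnitorHom A).comp F)) ∧
    (∀ A : DSObj C,
      (((DSObj.leftUnitorHom A).comp (DSObj.leftUnitorInvHom A)).equiv
        (PreHom.id ((DSObj.unit C).tensor A))) ∧
      (((DSObj.leftUnitorInvHom A).comp (DSObj.leftUnitorHom A)).equiv
        (PreHom.id A))) ∧
    -- the right unitors are natural isomorphisms
    (∀ {A B : DSObj C} (F : PreHom A B),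
      ((F.tensor (PreHom.id (DSObj.unit C))).comp (DSObj.rightUnitorHom B)).equiv
        ((DSObj.rightUnitorHom A).comp F)) ∧
    (∀ A : DSObj C,
      (((DSObj.rightUnitorHom A).comp (DSObj.rightUnitorInvHom A)).equiv
        (PreHom.id (A.tensor (DSObj.unit C)))) ∧
      (((DSObj.rightUnitorInvHom A).comp (DSObj.rightUnitorHom A)).equiv
        (PreHom.id A))) ∧
    -- the pentagon axiom
    (∀ A B D E : DSObj C,
      ((((DSObj.assocHom A B D).tensor (PreHom.id E)).comp
          ((DSObj.assocHom A (B.tensor D) E).comp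
            ((PreHom.id A).tensor (DSObj.assocHom B D E)))).equiv
        ((DSObj.assocHom (A.tensor B) D E).comp
          (DSObj.assocHom A B (D.tensor E))))) ∧
    -- the triangle axiom
    (∀ A B : DSObj C,
      (((DSObj.assocHom A (DSObj.unit C) B).comp
          ((PreHom.id A).tensor (DSObj.leftUnitorHom B))).equiv
        ((DSObj.rightUnitorHom A).tensor (PreHom.id B)))) :=
  ⟨DSObj.assocHom_naturality,
    fun A B D => ⟨DSObj.assocHom_comp_assocInvHom A B D, DSObj.assocInvHom_comp_assocHom A B D⟩,
    DSObj.leftUnitorHom_naturality,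
    fun A => ⟨DSObj.leftUnitorHom_comp_leftUnitorInvHom A,
      DSObj.leftUnitorInvHom_comp_leftUnitorHom A⟩,
    DSObj.rightUnitorHom_naturality,
    fun A => ⟨DSObj.rightUnitorHom_comp_rightUnitorInvHom A,
      DSObj.rightUnitorInvHom_comp_rightUnitorHom A⟩,
    DSObj.pentagon, DSObj.triangle⟩

/-- `𝒞_⊕` with the tensor product `⊗_{𝒞_⊕}`, unit `𝓘(𝟙)` with
componentwise unitors, and componentwise associators, is a monoidal category:
the associators and unitors are natural isomorphisms and the pentagon and
triangle axioms hold. -/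
theorem dsum_is_monoidal {C : Type u} [Category.{v} C] [Preadditive C]
    [MonoidalCategory C] {𝔽 : Type*} [Field 𝔽] [CategoryTheory.Linear 𝔽 C] :
    -- the associators are natural ...
    (∀ {A A' B B' D D' : DSObj C} (F : PreHom A A') (G : PreHom B B') (H : PreHom D D'),
      (((F.tensor G).tensor H).comp (DSObj.assocHom A' B' D')).equiv
        ((DSObj.assocHom A B D).comp (F.tensor (G.tensor H)))) ∧
    -- ... isomorphisms
    (∀ A B D : DSObj C,
      (((DSObj.assocHom A B D).comp (DSObj.assocInvHom A B D)).equiv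
        (PreHom.id ((A.tensor B).tensor D))) ∧
      (((DSObj.assocInvHom A B D).comp (DSObj.assocHom A B D)).equiv
        (PreHom.id (A.tensor (B.tensor D))))) ∧
    -- the left unitors are natural isomorphisms
    (∀ {A B : DSObj C} (F : PreHom A B),
      (((PreHom.id (DSObj.unit C)).tensor F).comp (DSObj.leftUnitorHom B)).equiv
        ((DSObj.leftUnitorHom A).comp F)) ∧
    (∀ A : DSObj C,
      (((DSObj.leftUnitorHom A).comp (DSObj.leftUnitorInvHom A)).equiv
        (PreHom.id ((DSObj.unit C).tensor A))) ∧
      (((DSObj.leftUnitorInvHom A).comp (DSObj.leftUnitorHom A)).equiv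
        (PreHom.id A))) ∧
    -- the right unitors are natural isomorphisms
    (∀ {A B : DSObj C} (F : PreHom A B),
      ((F.tensor (PreHom.id (DSObj.unit C))).comp (DSObj.rightUnitorHom B)).equiv
        ((DSObj.rightUnitorHom A).comp F)) ∧
    (∀ A : DSObj C,
      (((DSObj.rightUnitorHom A).comp (DSObj.rightUnitorInvHom A)).equiv
        (PreHom.id (A.tensor (DSObj.unit C)))) ∧
      (((DSObj.rightUnitorInvHom A).comp (DSObj.rightUnitorHom A)).equiv
        (PreHom.id A))) ∧
    -- the pentagon axiom
    (∀ A B D E : DSObj C,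
      ((((DSObj.assocHom A B D).tensor (PreHom.id E)).comp
          ((DSObj.assocHom A (B.tensor D) E).comp
            ((PreHom.id A).tensor (DSObj.assocHom B D E)))).equiv
        ((DSObj.assocHom (A.tensor B) D E).comp
          (DSObj.assocHom A B (D.tensor E))))) ∧
    -- the triangle axiom
    (∀ A B : DSObj C,
      (((DSObj.assocHom A (DSObj.unit C) B).comp
          ((PreHom.id A).tensor (DSObj.leftUnitorHom B))).equiv
        ((DSObj.rightUnitorHom A).tensor (PreHom.id B)))) :=
  dsum_is_monoidal_general
end

section
/- Let N be a positive integer, let x, y, z be of the form a/√(2N) with a ∈ {0,…,2N−1}, and let λ₂, λ₃ ∈ √(2N)ℤ. Then e^{πi( x·λ₂ + (x+y−k(x,y))·λ₃ − x·(λ₂+λ₃−k(y,z)) − y·λ₃ )} = e^{πi·x·k(y,z)} = (−1)^{x·k(y,z)}, where x·k(y,z) is an integer (equal to a if k(y,z) = √(2N) and to 0 if k(y,z) = 0). In particular this scalar is independent of λ₂ and λ₃. -/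
noncomputable section

open Complex

/-- `√(2N)`, the generator of the even lattice `L = √(2N)ℤ`. -/
def latQ (N : ℕ) : ℝ := Real.sqrt (2 * N)

/-- The 2-cocycle `k(x,y) = √(2N)` if `x + y ≥ √(2N)`, else `0`. -/
def latk (N : ℕ) (x y : ℝ) : ℝ := if latQ N ≤ x + y then latQ N else 0

/-- the associativity scalar computation. For representatives
`x = a/√(2N)`, `y = b/√(2N)`, `z = c/√(2N)` with `a,b,c ∈ {0,…,2N−1}` and
`λ₂, λ₃ ∈ √(2N)ℤ`,
`e^{πi(x·λ₂ + (x+y−k(x,y))·λ₃ − x·(λ₂+λ₃−k(y,z)) − y·λ₃)} = e^{πi·x·k(y,z)}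
 = (−1)^{x·k(y,z)}`, where `x·k(y,z)` is the integer `a` if `k(y,z) = √(2N)` and
`0` if `k(y,z) = 0`; in particular the scalar is independent of `λ₂` and `λ₃`. -/
theorem lattice_associativity_scalar (N : ℕ) (hN : 0 < N) (a b c : ℕ)
    (ha : a < 2 * N) (hb : b < 2 * N) (hc : c < 2 * N)
    (x y z : ℝ) (hx : x = a / latQ N) (hy : y = b / latQ N) (hz : z = c / latQ N)
    (l₂ l₃ : ℝ)
    (hl₂ : ∃ n : ℤ, l₂ = latQ N * (n : ℝ))
    (hl₃ : ∃ n : ℤ, l₃ = latQ N * (n : ℝ)) :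
    -- the exponent `x·k(y,z)` is the integer `a` or `0`
    x * latk N y z = (if latQ N ≤ y + z then (a : ℝ) else 0) ∧
    -- the scalar equals `e^{πi·x·k(y,z)}`, independently of `λ₂, λ₃`
    Complex.exp ((Real.pi : ℂ) * Complex.I *
        (((x * l₂ + (x + y - latk N x y) * l₃
          - x * (l₂ + l₃ - latk N y z) - y * l₃ : ℝ)) : ℂ)) =
      Complex.exp ((Real.pi : ℂ) * Complex.I * ((x * latk N y z : ℝ) : ℂ)) ∧
    -- and this is the sign `(−1)^{x·k(y,z)}`
    Complex.exp ((Real.pi : ℂ) * Complex.I * ((x * latk N y z : ℝ) : ℂ)) =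
      (-1 : ℂ) ^ (if latQ N ≤ y + z then (a : ℤ) else 0) := by

  obtain ⟨n₃, hn₃⟩ := hl₃
  have hQpos : (0:ℝ) < latQ N := Real.sqrt_pos.mpr (by positivity)
  have hQ2 : latQ N * latQ N = 2 * N := Real.mul_self_sqrt (by positivity)
  have hxQ : x * latQ N = a := by
    rw [hx]; field_simp
  have h1 : x * latk N y z = (if latQ N ≤ y + z then (a:ℝ) else 0) := by
    unfold latk; split <;> simp [hxQ]
  refine ⟨h1, ?_, ?_⟩
  · have hk : ∃ m : ℤ, latk N x y * l₃ = 2 * (m:ℝ) := by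
      unfold latk; split
      · refine ⟨N * n₃, ?_⟩
        rw [hn₃, ← mul_assoc, hQ2]; push_cast; ring
      · exact ⟨0, by simp⟩
    obtain ⟨m, hm⟩ := hk
    have key : (x * l₂ + (x + y - latk N x y) * l₃
          - x * (l₂ + l₃ - latk N y z) - y * l₃ : ℝ)
        = x * latk N y z - 2 * (m:ℝ) := by rw [← hm]; ring
    rw [key]
    have : ((Real.pi:ℂ) * Complex.I * ((x * latk N y z - 2 * (m:ℝ) : ℝ) : ℂ))
        = (Real.pi:ℂ) * Complex.I * ((x * latk N y z : ℝ):ℂ)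
          + ((-m : ℤ):ℂ) * (2 * Real.pi * Complex.I) := by push_cast; ring
    rw [this, Complex.exp_add, Complex.exp_int_mul_two_pi_mul_I, mul_one]
  · rw [h1]
    split
    · have : ((Real.pi:ℂ) * Complex.I * ((a:ℝ):ℂ)) = ((a:ℤ):ℂ) * (Real.pi * Complex.I) := by
        push_cast; ring
      rw [this, Complex.exp_int_mul, Complex.exp_pi_mul_I]
    · simp


end
end

section
/- The lattice associator scalars satisfy the pentagon identity: for all representatives w, x, y, z of the form a/√(2N) with a ∈ {0,…,2N−1}, one has (−1)^{w·k(x,y)} · (−1)^{w·k(x⊕y, z)} · (−1)^{x·k(y,z)} = (−1)^{(w⊕x)·k(y,z)} · (−1)^{w·k(x, y⊕z)}, where x⊕y := x+y−k(x,y) and all the exponents w·k(x,y), w·k(x⊕y,z), x·k(y,z), (w⊕x)·k(y,z), w·k(x,y⊕z) are integers. -/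
/-!
For integer numerators, `k(b/√(2N), c/√(2N)) = κ(b, c) · √(2N)`, where `κ(b, c) ∈ {0, 1}` is the
carry of `b + c` modulo `2N`; hence each exponent `(a/√(2N)) · k(b/√(2N), c/√(2N))` is the integer
`a · κ(b, c)`. The carries form a 2-cocycle, and with it the exponents on the two sides of the
pentagon differ by `2N · κ(w, x) · κ(y, z)` (in numerators), which is even.
-/

noncomputable section

/-- The induced addition of representatives: `x ⊕ y := x + y − k(x,y)`. -/
def latAdd (N : ℕ) (x y : ℝ) : ℝ := x + y - latk N x y

def latCarry (N : ℕ) (b c : ℤ) : ℤ := if 2 * (N : ℤ) ≤ b + c then 1 else 0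

/-- The numerator of `b / √(2N) ⊕ c / √(2N)`. -/
def latRepAdd (N : ℕ) (b c : ℤ) : ℤ := b + c - 2 * N * latCarry N b c

section Representatives

variable {N : ℕ}

lemma latQ_pos (hN : 0 < N) : 0 < latQ N :=
  Real.sqrt_pos.mpr (by positivity)

lemma latQ_mul_self (N : ℕ) : latQ N * latQ N = 2 * N :=
  Real.mul_self_sqrt (by positivity)

lemma latk_div_latQ (hN : 0 < N) (b c : ℤ) :
    latk N (b / latQ N) (c / latQ N) = latCarry N b c * latQ N := by
  have hQ := latQ_pos hN
  have hcarry : latQ N ≤ b / latQ N + c / latQ N ↔ 2 * (N : ℤ) ≤ b + c := by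
    rw [← add_div, le_div_iff₀ hQ, latQ_mul_self]
    exact_mod_cast Iff.rfl
  simp only [latk, latCarry, hcarry]
  split_ifs <;> simp

lemma latAdd_div_latQ (hN : 0 < N) (b c : ℤ) :
    latAdd N (b / latQ N) (c / latQ N) = latRepAdd N b c / latQ N := by
  have hQ := (latQ_pos hN).ne'
  rw [latAdd, latk_div_latQ hN, latRepAdd]
  push_cast
  field_simp
  linear_combination -(latCarry N b c : ℝ) * latQ_mul_self N

lemma div_latQ_mul_latk (hN : 0 < N) (a b c : ℤ) :
    a / latQ N * latk N (b / latQ N) (c / latQ N) = ((a * latCarry N b c : ℤ) : ℝ) := by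
  have hQ := (latQ_pos hN).ne'
  rw [latk_div_latQ hN]
  push_cast
  field_simp

end Representatives

section Carry

variable {N : ℕ} {b d : ℤ}

lemma latCarry_cocycle (c : ℤ) (hb : 0 ≤ b ∧ b < 2 * N) (hd : 0 ≤ d ∧ d < 2 * N) :
    latCarry N b c + latCarry N (latRepAdd N b c) d
      = latCarry N c d + latCarry N b (latRepAdd N c d) := by
  unfold latRepAdd latCarry
  split_ifs <;> omega

lemma latCarry_pentagon (a c : ℤ) (hb : 0 ≤ b ∧ b < 2 * N) (hd : 0 ≤ d ∧ d < 2 * N) :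
    a * latCarry N b c + a * latCarry N (latRepAdd N b c) d + b * latCarry N c d
      = latRepAdd N a b * latCarry N c d + a * latCarry N b (latRepAdd N c d)
        + 2 * (N * latCarry N a b * latCarry N c d) := by
  have hab : latRepAdd N a b = a + b - 2 * N * latCarry N a b := rfl
  linear_combination a * latCarry_cocycle c hb hd - latCarry N c d * hab

end Carry

lemma neg_one_zpow_add_two_mul {R : Type*} [DivisionRing R] (n m : ℤ) :
    (-1 : R) ^ (n + 2 * m) = (-1 : R) ^ n := by
  rw [zpow_add₀ (neg_ne_zero.mpr one_ne_zero), (even_two_mul m).neg_one_zpow, mul_one]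

theorem lattice_pentagon_identity_general (N : ℕ) (aw ax ay az : ℕ)
    (hx : ax < 2 * N) (hz : az < 2 * N)
    (w x y z : ℝ) (hw' : w = aw / latQ N) (hx' : x = ax / latQ N)
    (hy' : y = ay / latQ N) (hz' : z = az / latQ N) :
    -- all the exponents are integers ...
    (∃ e : ℤ, (e : ℝ) = w * latk N x y) ∧
    (∃ e : ℤ, (e : ℝ) = w * latk N (latAdd N x y) z) ∧
    (∃ e : ℤ, (e : ℝ) = x * latk N y z) ∧
    (∃ e : ℤ, (e : ℝ) = (latAdd N w x) * latk N y z) ∧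
    (∃ e : ℤ, (e : ℝ) = w * latk N x (latAdd N y z)) ∧
    -- ... and the corresponding signs satisfy the pentagon identity
    (∀ e₁ e₂ e₃ e₄ e₅ : ℤ,
      (e₁ : ℝ) = w * latk N x y →
      (e₂ : ℝ) = w * latk N (latAdd N x y) z →
      (e₃ : ℝ) = x * latk N y z →
      (e₄ : ℝ) = (latAdd N w x) * latk N y z →
      (e₅ : ℝ) = w * latk N x (latAdd N y z) →
      (-1 : ℝ) ^ e₁ * (-1 : ℝ) ^ e₂ * (-1 : ℝ) ^ e₃
        = (-1 : ℝ) ^ e₄ * (-1 : ℝ) ^ e₅) := by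
  have hN : 0 < N := by omega
  have bounds : ∀ a : ℕ, a < 2 * N → 0 ≤ (a : ℤ) ∧ (a : ℤ) < 2 * N :=
    fun a ha => ⟨a.cast_nonneg, by exact_mod_cast ha⟩
  rw [← Int.cast_natCast] at hw' hx' hy' hz'
  subst hw' hx' hy' hz'
  simp only [latAdd_div_latQ hN, div_latQ_mul_latk hN]
  refine ⟨⟨_, rfl⟩, ⟨_, rfl⟩, ⟨_, rfl⟩, ⟨_, rfl⟩, ⟨_, rfl⟩, ?_⟩
  intro e₁ e₂ e₃ e₄ e₅ h₁ h₂ h₃ h₄ h₅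
  simp only [Int.cast_inj] at h₁ h₂ h₃ h₄ h₅
  subst h₁ h₂ h₃ h₄ h₅
  have hne : (-1 : ℝ) ≠ 0 := neg_ne_zero.mpr one_ne_zero
  rw [← zpow_add₀ hne, ← zpow_add₀ hne, ← zpow_add₀ hne,
    latCarry_pentagon _ _ (bounds ax hx) (bounds az hz), neg_one_zpow_add_two_mul]

/-- the lattice associator scalars satisfy the pentagon identity:
for representatives `w, x, y, z` of the form `a/√(2N)` with `a ∈ {0,…,2N−1}`,
`(−1)^{w·k(x,y)}·(−1)^{w·k(x⊕y,z)}·(−1)^{x·k(y,z)}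
  = (−1)^{(w⊕x)·k(y,z)}·(−1)^{w·k(x,y⊕z)}`,
where all five exponents are integers. -/
theorem lattice_pentagon_identity (N : ℕ) (hN : 0 < N) (aw ax ay az : ℕ)
    (hw : aw < 2 * N) (hx : ax < 2 * N) (hy : ay < 2 * N) (hz : az < 2 * N)
    (w x y z : ℝ) (hw' : w = aw / latQ N) (hx' : x = ax / latQ N)
    (hy' : y = ay / latQ N) (hz' : z = az / latQ N) :
    -- all the exponents are integers ...
    (∃ e : ℤ, (e : ℝ) = w * latk N x y) ∧
    (∃ e : ℤ, (e : ℝ) = w * latk N (latAdd N x y) z) ∧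
    (∃ e : ℤ, (e : ℝ) = x * latk N y z) ∧
    (∃ e : ℤ, (e : ℝ) = (latAdd N w x) * latk N y z) ∧
    (∃ e : ℤ, (e : ℝ) = w * latk N x (latAdd N y z)) ∧
    -- ... and the corresponding signs satisfy the pentagon identity
    (∀ e₁ e₂ e₃ e₄ e₅ : ℤ,
      (e₁ : ℝ) = w * latk N x y →
      (e₂ : ℝ) = w * latk N (latAdd N x y) z →
      (e₃ : ℝ) = x * latk N y z →
      (e₄ : ℝ) = (latAdd N w x) * latk N y z →
      (e₅ : ℝ) = w * latk N x (latAdd N y z) →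
      (-1 : ℝ) ^ e₁ * (-1 : ℝ) ^ e₂ * (-1 : ℝ) ^ e₃
        = (-1 : ℝ) ^ e₄ * (-1 : ℝ) ^ e₅) :=
  lattice_pentagon_identity_general N aw ax ay az hx hz w x y z hw' hx' hy' hz'

end
end

section
/- Fix a positive integer N. The following data defines a ℂ-linear braided monoidal category with twist: objects are the 2N representatives x = a/√(2N), a ∈ {0,…,2N−1}; Hom(x,y) = ℂ if x = y and 0 otherwise; tensor product x ⊗ y = x⊕y := x+y−k(x,y) with unit 0; associativity constraint the scalar (−1)^{x·k(y,z)} on x⊗y⊗z; braiding the scalar e^{πi·x·y}: Hom(x⊕y, y⊕x); and twist the scalar e^{πi·x²} on x. That is, the associators satisfy the pentagon and triangle axioms, the braiding satisfies both hexagon axioms, and the twist satisfies the balancing axiom θ_{x⊗y} = c_{y,x}∘c_{x,y}∘(θ_x ⊗ θ_y). -/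
noncomputable section

open Complex

/-- The associativity constraint scalar `(−1)^{x·k(y,z)} = e^{πi·x·k(y,z)}`. -/
def latAssoc (N : ℕ) (x y z : ℝ) : ℂ :=
  Complex.exp ((Real.pi : ℂ) * Complex.I * ((x * latk N y z : ℝ) : ℂ))

/-- The braiding scalar `e^{πi·x·y}`. -/
def latBraid (x y : ℝ) : ℂ :=
  Complex.exp ((Real.pi : ℂ) * Complex.I * ((x * y : ℝ) : ℂ))

/-- The twist scalar `e^{πi·x²}`. -/
def latTwist (x : ℝ) : ℂ :=
  Complex.exp ((Real.pi : ℂ) * Complex.I * ((x ^ 2 : ℝ) : ℂ))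

/-- Auxiliary: `E r = e^{πi r}`. -/
def latE (r : ℝ) : ℂ := Complex.exp ((Real.pi : ℂ) * Complex.I * (r : ℂ))

lemma latE_congr {r s : ℝ} (m : ℤ) (h : r = s + 2 * m) : latE r = latE s := by
  unfold latE
  rw [show ((r : ℝ) : ℂ) = (s : ℂ) + 2 * (m : ℂ) by rw [h]; push_cast; ring]
  rw [mul_add, Complex.exp_add,
    show (Real.pi : ℂ) * Complex.I * (2 * (m : ℂ)) = (m : ℤ) * (2 * Real.pi * Complex.I) by
      push_cast; ring,
    Complex.exp_int_mul_two_pi_mul_I, mul_one]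

lemma latE_mul (a b : ℝ) : latE a * latE b = latE (a + b) := by
  unfold latE; rw [← Complex.exp_add]; congr 1; push_cast; ring

lemma latE_inv (a : ℝ) : (latE a)⁻¹ = latE (-a) := by
  unfold latE; rw [← Complex.exp_neg]; congr 1; push_cast; ring

lemma latAssoc_eq (N : ℕ) (x y z : ℝ) : latAssoc N x y z = latE (x * latk N y z) := rfl
lemma latBraid_eq (x y : ℝ) : latBraid x y = latE (x * y) := rfl
lemma latTwist_eq (x : ℝ) : latTwist x = latE (x ^ 2) := rfl

lemma latk_symm (N : ℕ) (u v : ℝ) : latk N u v = latk N v u := by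
  unfold latk; rw [add_comm]

lemma latk_cases (N : ℕ) (u v : ℝ) : latk N u v = 0 ∨ latk N u v = latQ N := by
  unfold latk; split_ifs
  · exact Or.inr rfl
  · exact Or.inl rfl

lemma latk_cocycle (N : ℕ) {x y z : ℝ} (hx0 : 0 ≤ x) (hx1 : x < latQ N)
    (hy0 : 0 ≤ y) (hy1 : y < latQ N) (hz0 : 0 ≤ z) (hz1 : z < latQ N) :
    latk N x y + latk N (latAdd N x y) z = latk N y z + latk N x (latAdd N y z) := by
  unfold latAdd latk
  split_ifs <;> linarith

/-- the data of the skeleton of `Rep⁰ V_L` — `2N` simple objects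
`x = a/√(2N)`, tensor product `x ⊗ y = x ⊕ y` with unit `0`, associator scalars
`(−1)^{x·k(y,z)}`, braiding scalars `e^{πi·x·y}` and twist scalars `e^{πi·x²}` —
defines a `ℂ`-linear braided monoidal category with twist. That is: `0` is a unit
for `⊕`, the associators satisfy the pentagon and triangle axioms, the braiding
satisfies both hexagon axioms, and the twist satisfies the balancing axiom
`θ_{x⊗y} = c_{y,x} ∘ c_{x,y} ∘ (θ_x ⊗ θ_y)`. -/
theorem lattice_rep_category_axioms (N : ℕ) (hN : 0 < N) :
    ∀ aw ax ay az : ℕ, aw < 2 * N → ax < 2 * N → ay < 2 * N → az < 2 * N →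
    ∀ w x y z : ℝ, w = aw / latQ N → x = ax / latQ N → y = ay / latQ N →
      z = az / latQ N →
    -- `0` is a unit for the tensor product
    (latAdd N 0 x = x ∧ latAdd N x 0 = x) ∧
    -- pentagon axiom
    (latAssoc N w x y * latAssoc N w (latAdd N x y) z * latAssoc N x y z
      = latAssoc N (latAdd N w x) y z * latAssoc N w x (latAdd N y z)) ∧
    -- triangle axiom (the unitors are identities)
    (latAssoc N x 0 y = 1) ∧
    -- first hexagon axiom
    (latAssoc N x y z * latBraid x (latAdd N y z) * latAssoc N y z x
      = latBraid x y * latAssoc N y x z * latBraid x z) ∧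
    -- second hexagon axiom
    ((latAssoc N x y z)⁻¹ * latBraid (latAdd N x y) z * (latAssoc N z x y)⁻¹
      = latBraid y z * (latAssoc N x z y)⁻¹ * latBraid x z) ∧
    -- balancing axiom
    (latTwist (latAdd N x y) = latBraid y x * latBraid x y * latTwist x * latTwist y) := by
  intro aw ax ay az haw hax hay haz w x y z hw hx hy hz
  have hQ0 : 0 < latQ N := Real.sqrt_pos.mpr (by positivity)
  have hQ2 : latQ N * latQ N = 2 * (N : ℝ) := by
    have := Real.mul_self_sqrt (show (0:ℝ) ≤ 2 * N by positivity)
    simpa [latQ] using this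
  have hbd : ∀ a : ℕ, a < 2 * N → 0 ≤ (a : ℝ) / latQ N ∧ (a : ℝ) / latQ N < latQ N := by
    intro a ha
    refine ⟨by positivity, ?_⟩
    rw [div_lt_iff₀ hQ0, hQ2]
    exact_mod_cast ha
  have hmul : ∀ a : ℕ, (a : ℝ) / latQ N * latQ N = a := fun a =>
    div_mul_cancel₀ _ hQ0.ne'
  obtain ⟨hw0, hwQ⟩ : 0 ≤ w ∧ w < latQ N := hw ▸ hbd aw haw
  obtain ⟨hx0, hxQ⟩ : 0 ≤ x ∧ x < latQ N := hx ▸ hbd ax hax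
  obtain ⟨hy0, hyQ⟩ : 0 ≤ y ∧ y < latQ N := hy ▸ hbd ay hay
  obtain ⟨hz0, hzQ⟩ : 0 ≤ z ∧ z < latQ N := hz ▸ hbd az haz
  have hwm : w * latQ N = aw := by rw [hw]; exact hmul aw
  have hxm : x * latQ N = ax := by rw [hx]; exact hmul ax
  have hym : y * latQ N = ay := by rw [hy]; exact hmul ay
  have hzm : z * latQ N = az := by rw [hz]; exact hmul az
  refine ⟨⟨?_, ?_⟩, ?_, ?_, ?_, ?_, ?_⟩
  · -- left unit
    unfold latAdd latk
    rw [if_neg (by push_neg; linarith)]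
    ring
  · -- right unit
    unfold latAdd latk
    rw [if_neg (by push_neg; linarith)]
    ring
  · -- pentagon
    have hc := latk_cocycle N hx0 hxQ hy0 hyQ hz0 hzQ
    have hAdd : latAdd N w x = w + x - latk N w x := rfl
    rw [latAssoc_eq, latAssoc_eq, latAssoc_eq, latAssoc_eq, latAssoc_eq,
      latE_mul, latE_mul, latE_mul, hAdd]
    rcases latk_cases N w x with h1 | h1 <;>
      rcases latk_cases N y z with h2 | h2 <;> rw [h1, h2] <;> rw [h2] at hc
    · refine latE_congr 0 ?_; push_cast; linear_combination w * hc
    · refine latE_congr 0 ?_; push_cast; linear_combination w * hc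
    · refine latE_congr 0 ?_; push_cast; linear_combination w * hc
    · refine latE_congr (N : ℤ) ?_; push_cast; linear_combination w * hc + hQ2
  · -- triangle
    have hk : latk N 0 y = 0 := by
      unfold latk; rw [if_neg (by push_neg; linarith)]
    rw [latAssoc_eq, hk, mul_zero]
    unfold latE
    simp
  · -- hexagon 1
    have hAdd : latAdd N y z = y + z - latk N y z := rfl
    rw [latAssoc_eq, latAssoc_eq, latAssoc_eq, latBraid_eq, latBraid_eq, latBraid_eq,
      latE_mul, latE_mul, latE_mul, latE_mul, hAdd, latk_symm N z x]
    refine latE_congr 0 ?_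
    push_cast
    ring
  · -- hexagon 2
    have hAdd : latAdd N x y = x + y - latk N x y := rfl
    rw [latAssoc_eq, latAssoc_eq, latAssoc_eq, latBraid_eq, latBraid_eq, latBraid_eq,
      latE_inv, latE_inv, latE_inv, latE_mul, latE_mul, latE_mul, latE_mul,
      hAdd, latk_symm N z y]
    rcases latk_cases N x y with h1 | h1 <;> rw [h1]
    · refine latE_congr 0 ?_; push_cast; ring
    · refine latE_congr (-(az : ℤ)) ?_; push_cast; linear_combination (-2 : ℝ) * hzm
  · -- balancing
    have hAdd : latAdd N x y = x + y - latk N x y := rfl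
    rw [latTwist_eq, latTwist_eq, latTwist_eq, latBraid_eq, latBraid_eq,
      latE_mul, latE_mul, latE_mul, hAdd]
    rcases latk_cases N x y with h1 | h1 <;> rw [h1]
    · refine latE_congr 0 ?_; push_cast; ring
    · refine latE_congr ((N : ℤ) - ax - ay) ?_
      push_cast
      linear_combination hQ2 - 2 * hxm - 2 * hym

end
end
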